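/- Let u be meromorphic at 0 with u(x) = r(r+1)/x² + O(1) for a positive integer r, and suppose ψ is a meromorphic solution of -ψ'' + uψ = αψ with a pole of order r at 0, and φ is a meromorphic solution of -φ'' + uφ = βφ with a pole of order at most r at 0. Then the Wronskian W(ψ,φ) = ψ'φ - ψφ' is meromorphic at 0, and the residue at 0 of (α-β)ψφ equals zero (since it is the derivative of the meromorphic function W). -/

import Mathlib

/-!
Writing the equations as `U f = c f + f''`, commutativity gives `(Uψ)φ = ψ(Uφ)`, hence
`(α - β) ψ φ = -(ψ'' φ - ψ φ'') = -W'` with `W = ψ' φ - ψ φ'`. The `X⁻¹` coefficient of a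
derivative is `0 · W₀ = 0`.
-/

namespace LaurentSeries

open HahnSeries

variable {R : Type*} [Ring R]

/-- The Euler operator `θ = X d/dX`. It preserves supports, so its Leibniz rule holds termwise on
the antidiagonal; `d/dX = X⁻¹ θ` then inherits it. -/
def eulerDeriv (f : LaurentSeries R) : LaurentSeries R where
  coeff n := n • f.coeff n
  isPWO_support' := f.isPWO_support.mono fun n hn h => hn (by simp only [h, smul_zero])

@[simp]
theorem eulerDeriv_coeff (f : LaurentSeries R) (n : ℤ) :
    (eulerDeriv f).coeff n = n • f.coeff n :=
  rfl

theorem support_eulerDeriv_subset (f : LaurentSeries R) : (eulerDeriv f).support ⊆ f.support :=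
  fun n hn h => hn (by rw [eulerDeriv_coeff, h, smul_zero])

theorem eulerDeriv_mul (f g : LaurentSeries R) :
    eulerDeriv (f * g) = eulerDeriv f * g + f * eulerDeriv g := by
  ext n
  rw [coeff_add, coeff_mul_left' f.isPWO_support (support_eulerDeriv_subset f),
    coeff_mul_right' g.isPWO_support (support_eulerDeriv_subset g), eulerDeriv_coeff, coeff_mul,
    Finset.smul_sum, ← Finset.sum_add_distrib]
  refine Finset.sum_congr rfl fun ij hij => ?_
  rw [← (Finset.mem_antidiagonal.1 hij).2.2, eulerDeriv_coeff, eulerDeriv_coeff, add_smul,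
    smul_mul_assoc, mul_smul_comm]

theorem single_neg_one_mul_eulerDeriv (f : LaurentSeries R) :
    single (-1) 1 * eulerDeriv f = derivative R f := by
  ext n
  simp [coeff_single_mul]

theorem single_mul_comm (n : ℤ) (f : LaurentSeries R) : single n 1 * f = f * single n 1 := by
  ext m
  simp [coeff_single_mul, coeff_mul_single]

theorem derivative_mul (f g : LaurentSeries R) :
    derivative R (f * g) = derivative R f * g + f * derivative R g := by
  rw [← single_neg_one_mul_eulerDeriv, eulerDeriv_mul, mul_add, ← mul_assoc,
    single_neg_one_mul_eulerDeriv, ← mul_assoc, single_mul_comm, mul_assoc,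
    single_neg_one_mul_eulerDeriv]

theorem derivative_coeff (f : LaurentSeries R) (n : ℤ) :
    (derivative R f).coeff n = (n + 1) • f.coeff (n + 1) := by
  simp

theorem derivative_coeff_neg_one (f : LaurentSeries R) : (derivative R f).coeff (-1) = 0 := by
  rw [derivative_coeff, neg_add_cancel, zero_smul]

theorem derivative_derivative_coeff (f : LaurentSeries R) (n : ℤ) :
    (derivative R (derivative R f)).coeff n = ((n : R) + 2) * ((n : R) + 1) * f.coeff (n + 2) := by
  rw [derivative_coeff, derivative_coeff, smul_comm, smul_smul, zsmul_eq_mul, add_assoc,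
    one_add_one_eq_two]
  push_cast
  rfl

theorem derivative_wronskian (f g : LaurentSeries R) :
    derivative R (derivative R f * g - f * derivative R g) =
      derivative R (derivative R f) * g - f * derivative R (derivative R g) := by
  rw [map_sub, derivative_mul, derivative_mul]
  abel

end LaurentSeries

open LaurentSeries HahnSeries in
theorem wronskian_residue_zero_general (α β : ℂ)
    (U ψ φ : LaurentSeries ℂ)
    (hodeψ : ∀ n : ℤ,
      -((n : ℂ) + 2) * ((n : ℂ) + 1) * ψ.coeff (n + 2) + (U * ψ).coeff n = α * ψ.coeff n)
    (hodeφ : ∀ n : ℤ,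
      -((n : ℂ) + 2) * ((n : ℂ) + 1) * φ.coeff (n + 2) + (U * φ).coeff n = β * φ.coeff n) :
    (α - β) * (ψ * φ).coeff (-1) = 0 := by
  have ode_eq {c : ℂ} {f : LaurentSeries ℂ} (hode : ∀ n : ℤ,
      -((n : ℂ) + 2) * ((n : ℂ) + 1) * f.coeff (n + 2) + (U * f).coeff n = c * f.coeff n) :
      U * f = C c * f + derivative ℂ (derivative ℂ f) := by
    ext n
    rw [coeff_add, C_mul_eq_smul, coeff_smul, derivative_derivative_coeff, smul_eq_mul]
    linear_combination hode n
  have hW : C (α - β) * (ψ * φ) =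
      -derivative ℂ (derivative ℂ ψ * φ - ψ * derivative ℂ φ) := by
    rw [derivative_wronskian, map_sub]
    linear_combination ψ * ode_eq hodeφ - φ * ode_eq hodeψ
  rw [← smul_eq_mul, ← coeff_smul, ← C_mul_eq_smul, hW, coeff_neg, derivative_coeff_neg_one,
    neg_zero]

/-- Let `u` be meromorphic at `0` with `u = r(r+1)/x² + O(1)`.  If `ψ` is
a meromorphic solution of `-ψ'' + uψ = αψ` with a pole of order `r` at `0`, and `φ` a
meromorphic solution of `-φ'' + uφ = βφ` with a pole of order at most `r`, then the
residue at `0` of `(α-β)ψφ` vanishes (it is the derivative of the Wronskian).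
The ODEs are encoded coefficientwise on Laurent series:
`-(n+2)(n+1)ψ_{n+2} + (Uψ)_n = α ψ_n`. -/
theorem wronskian_residue_zero (r : ℕ) (hr : 1 ≤ r) (α β : ℂ)
    (U ψ φ : LaurentSeries ℂ)
    (hU₂ : U.coeff (-2) = (r : ℂ) * (r + 1))
    (hUreg : ∀ k : ℤ, k < 0 → k ≠ -2 → U.coeff k = 0)
    (hodeψ : ∀ n : ℤ,
      -((n : ℂ) + 2) * ((n : ℂ) + 1) * ψ.coeff (n + 2) + (U * ψ).coeff n = α * ψ.coeff n)
    (hodeφ : ∀ n : ℤ,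
      -((n : ℂ) + 2) * ((n : ℂ) + 1) * φ.coeff (n + 2) + (U * φ).coeff n = β * φ.coeff n)
    (hψpole : ∀ k : ℤ, k < -(r : ℤ) → ψ.coeff k = 0) (hψlead : ψ.coeff (-(r : ℤ)) ≠ 0)
    (hφpole : ∀ k : ℤ, k < -(r : ℤ) → φ.coeff k = 0) :
    (α - β) * (ψ * φ).coeff (-1) = 0 :=
  wronskian_residue_zero_general α β U ψ φ hodeψ hodeφ
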